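/- arXiv:2401.12532 — 5 statements merged into one kernel-verified Lean document; each statement's English description precedes it below -/
import Mathlib

section
/- Let d ≥ 1, σ > 1, η > 0, α ≥ 1, and A = 2√d·σ/(σ²−1). Define g(α) = (1+α)/2·η and R(α) = Φ(−A·g(α) + √((A/σ)²·g(α)² + 2·log σ/(σ²−1))), where Φ is the standard normal CDF. Then R is strictly monotonically decreasing in α. -/
open Real Set

/-- Standard normal cumulative distribution function. -/
noncomputable def stdNormalCDF (z : ℝ) : ℝ :=
  ∫ t in Set.Iic z, (Real.sqrt (2 * Real.pi))⁻¹ * Real.exp (-t ^ 2 / 2)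

open MeasureTheory in
lemma gauss_integrable : MeasureTheory.Integrable
    (fun t : ℝ => (Real.sqrt (2 * Real.pi))⁻¹ * Real.exp (-t ^ 2 / 2)) := by
  have h : (fun t : ℝ => (Real.sqrt (2 * Real.pi))⁻¹ * Real.exp (-t ^ 2 / 2))
      = fun t : ℝ => (Real.sqrt (2 * Real.pi))⁻¹ * Real.exp (-(1/2) * t ^ 2) := by
    funext t; ring_nf
  rw [h]
  exact (integrable_exp_neg_mul_sq (by norm_num : (0:ℝ) < 1/2)).const_mul _

open MeasureTheory in
lemma stdNormalCDF_strictMono : StrictMono stdNormalCDF := by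
  intro a b hab
  have hi := gauss_integrable
  have h1 : stdNormalCDF b - stdNormalCDF a
      = ∫ t in a..b, (Real.sqrt (2 * Real.pi))⁻¹ * Real.exp (-t ^ 2 / 2) := by
    unfold stdNormalCDF
    exact intervalIntegral.integral_Iic_sub_Iic hi.integrableOn hi.integrableOn
  have hpos : 0 < ∫ t in a..b, (Real.sqrt (2 * Real.pi))⁻¹ * Real.exp (-t ^ 2 / 2) := by
    apply intervalIntegral.intervalIntegral_pos_of_pos_on hi.intervalIntegrable
    · intro x _
      positivity
    · exact hab
  linarith

lemma sqrt_key (A B c a b : ℝ) (hA0 : 0 < A) (hB0 : 0 < B) (hBA : B < A)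
    (hc : 0 < c) (ha : 0 < a) (hab : a < b) :
    -A * b + Real.sqrt (B ^ 2 * b ^ 2 + c) < -A * a + Real.sqrt (B ^ 2 * a ^ 2 + c) := by
  have hb : 0 < b := lt_trans ha hab
  have hx1 : 0 ≤ B ^ 2 * a ^ 2 + c := by positivity
  have hx2 : 0 ≤ B ^ 2 * b ^ 2 + c := by positivity
  set s1 := Real.sqrt (B ^ 2 * a ^ 2 + c) with hs1def
  set s2 := Real.sqrt (B ^ 2 * b ^ 2 + c) with hs2def
  have hs1sq : s1 ^ 2 = B ^ 2 * a ^ 2 + c := Real.sq_sqrt hx1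
  have hs2sq : s2 ^ 2 = B ^ 2 * b ^ 2 + c := Real.sq_sqrt hx2
  have hs1ge : B * a ≤ s1 := by
    rw [hs1def, show B * a = Real.sqrt ((B * a) ^ 2) from
      (Real.sqrt_sq (by positivity)).symm]
    apply Real.sqrt_le_sqrt; nlinarith
  have hs2ge : B * b ≤ s2 := by
    rw [hs2def, show B * b = Real.sqrt ((B * b) ^ 2) from
      (Real.sqrt_sq (by positivity)).symm]
    apply Real.sqrt_le_sqrt; nlinarith
  have hs10 : 0 < s1 := lt_of_lt_of_le (by positivity) hs1ge
  have hs20 : 0 < s2 := lt_of_lt_of_le (by positivity) hs2ge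
  have hsum : B * a + B * b ≤ s1 + s2 := add_le_add hs1ge hs2ge
  have hsub : 0 < b - a := by linarith
  have hkey : s2 - s1 ≤ B * (b - a) := by
    have hS : 0 < s1 + s2 := add_pos hs10 hs20
    refine le_of_mul_le_mul_right ?_ hS
    have h1 : (s2 - s1) * (s1 + s2) = B ^ 2 * b ^ 2 - B ^ 2 * a ^ 2 := by
      linear_combination hs2sq - hs1sq
    have h3 : B * (b - a) * (B * a + B * b) ≤ B * (b - a) * (s1 + s2) :=
      mul_le_mul_of_nonneg_left hsum (mul_nonneg hB0.le hsub.le)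
    nlinarith [h1, h3]
  have hfin : B * (b - a) < A * (b - a) := mul_lt_mul_of_pos_right hBA hsub
  linarith

theorem stmt0 (d : ℕ) (σ η : ℝ) (hd : 1 ≤ d) (hσ : 1 < σ) (hη : 0 < η)
    (A : ℝ) (hA : A = 2 * Real.sqrt d * σ / (σ ^ 2 - 1))
    (g R : ℝ → ℝ)
    (hg : ∀ α, g α = (1 + α) / 2 * η)
    (hR : ∀ α, R α = stdNormalCDF (-A * g α +
      Real.sqrt ((A / σ) ^ 2 * (g α) ^ 2 + 2 * Real.log σ / (σ ^ 2 - 1)))) :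
    StrictAntiOn R (Set.Ici (1 : ℝ)) := by
  intro α hα β hβ hαβ
  simp only [Set.mem_Ici] at hα hβ
  have hσ1 : 0 < σ ^ 2 - 1 := by nlinarith
  have hd1 : (1:ℝ) ≤ (d:ℝ) := by exact_mod_cast hd
  have hd0 : 0 < Real.sqrt d := Real.sqrt_pos.mpr (by linarith)
  have hA0 : 0 < A := by
    rw [hA]; apply div_pos; nlinarith; exact hσ1
  have hB0 : 0 < A / σ := div_pos hA0 (by linarith)
  have hBA : A / σ < A := div_lt_self hA0 hσ
  have hc : 0 < 2 * Real.log σ / (σ ^ 2 - 1) :=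
    div_pos (by have := Real.log_pos hσ; linarith) hσ1
  have hga : 0 < g α := by rw [hg]; nlinarith
  have hgg : g α < g β := by rw [hg, hg]; nlinarith
  rw [hR, hR]
  exact stdNormalCDF_strictMono
    (sqrt_key A (A / σ) _ (g α) (g β) hA0 hB0 hBA hc hga hgg)
end

section
/- With notation as before: d ≥ 1, σ > 1, η > 0, 0 < ε < η, α ≥ 1, A = 2√d·σ/(σ²−1), h(σ) = 2σ²·log σ/(σ²−1), g(α) = (1+α)/2·η − ε, z₊(α) = −A·g(α) + √((A/σ)²·g(α)² + h(σ)/σ²), z₋(α) = (A/σ)·g(α) − √(A²·g(α)² + h(σ)). Then the robust accuracy disparity D_rob(α) = Φ(z₊(α)) − Φ(z₋(α)) is strictly monotonically decreasing in α. -/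
/-!
With `x = A g(α)`, which increases with `α`, and `S = √(x² + h)`, the two arguments are
`z₊ = -x + S / σ` and `z₋ = x / σ - S`. Differentiating in `x` gives
`D' = (φ(z₊) z₋ - φ(z₋) z₊) / S`, which is negative: `z₋ < 0`, `z₋ < z₊`, and
`z₋² - z₊² = h (1 - σ⁻²) > 0`, so the density satisfies `φ(z₋) < φ(z₊)`.
-/

open Real Set

open MeasureTheory ProbabilityTheory

lemma gaussianPDFReal_zero_one_apply (x : ℝ) :
    gaussianPDFReal 0 1 x = (√(2 * π))⁻¹ * exp (-x ^ 2 / 2) := by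
  simp [gaussianPDFReal]

lemma hasDerivAt_stdNormalCDF (z : ℝ) : HasDerivAt stdNormalCDF (gaussianPDFReal 0 1 z) z := by
  have hint := integrable_gaussianPDFReal 0 1
  have hcont : Continuous (gaussianPDFReal 0 1) := by
    rw [gaussianPDFReal_def]
    fun_prop
  have hΦ : stdNormalCDF = fun w ↦ stdNormalCDF 0 + ∫ t in (0 : ℝ)..w, gaussianPDFReal 0 1 t := by
    funext w
    simp only [stdNormalCDF, ← gaussianPDFReal_zero_one_apply]
    rw [← intervalIntegral.integral_Iic_sub_Iic hint.integrableOn hint.integrableOn]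
    ring
  rw [hΦ]
  exact (intervalIntegral.integral_hasDerivAt_right hint.intervalIntegrable
    (hcont.stronglyMeasurableAtFilter _ _) hcont.continuousAt).const_add _

lemma gaussianPDFReal_zero_one_lt_of_sq_lt {a b : ℝ} (h : a ^ 2 < b ^ 2) :
    gaussianPDFReal 0 1 b < gaussianPDFReal 0 1 a := by
  simp only [gaussianPDFReal_zero_one_apply]
  gcongr

lemma gaussianPDFReal_mul_sub_mul_neg {p m : ℝ} (hm0 : m < 0) (hmp : m < p)
    (hsq : p ^ 2 < m ^ 2) :
    gaussianPDFReal 0 1 p * m - gaussianPDFReal 0 1 m * p < 0 := by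
  have hφ := gaussianPDFReal_zero_one_lt_of_sq_lt hsq
  have hφ0 := gaussianPDFReal_pos 0 1 m one_ne_zero
  nlinarith [mul_lt_mul_of_neg_right hφ hm0, mul_lt_mul_of_pos_left hmp hφ0]

section

variable {σ c : ℝ}

lemma hasDerivAt_sqrt_sq_add (hc : 0 < c) (x : ℝ) :
    HasDerivAt (fun x ↦ √(x ^ 2 + c)) (x / √(x ^ 2 + c)) x := by
  convert ((hasDerivAt_pow 2 x).add_const c).sqrt (by positivity) using 1
  ring

lemma abs_lt_sqrt_sq_add (hc : 0 < c) (x : ℝ) : |x| < √(x ^ 2 + c) := by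
  rw [← sqrt_sq_eq_abs]
  exact sqrt_lt_sqrt (sq_nonneg x) (by linarith)

lemma hasDerivAt_stdNormalCDF_sub (hσ : σ ≠ 0) (hc : 0 < c) (x : ℝ) :
    HasDerivAt
      (fun x ↦ stdNormalCDF (-x + √(x ^ 2 + c) / σ) - stdNormalCDF (x / σ - √(x ^ 2 + c)))
      ((gaussianPDFReal 0 1 (-x + √(x ^ 2 + c) / σ) * (x / σ - √(x ^ 2 + c))
        - gaussianPDFReal 0 1 (x / σ - √(x ^ 2 + c)) * (-x + √(x ^ 2 + c) / σ))
          / √(x ^ 2 + c)) x := by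
  have hS : √(x ^ 2 + c) ≠ 0 := by positivity
  have hp : HasDerivAt (fun x ↦ -x + √(x ^ 2 + c) / σ)
      ((x / σ - √(x ^ 2 + c)) / √(x ^ 2 + c)) x := by
    refine ((hasDerivAt_id' x).neg.add ((hasDerivAt_sqrt_sq_add hc x).div_const σ)).congr_deriv ?_
    field_simp
    ring
  have hm : HasDerivAt (fun x ↦ x / σ - √(x ^ 2 + c))
      ((-x + √(x ^ 2 + c) / σ) / √(x ^ 2 + c)) x := by
    refine (((hasDerivAt_id' x).div_const σ).sub (hasDerivAt_sqrt_sq_add hc x)).congr_deriv ?_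
    field_simp
    ring
  exact (((hasDerivAt_stdNormalCDF _).comp x hp).fun_sub
    ((hasDerivAt_stdNormalCDF _).comp x hm)).congr_deriv (by ring)

lemma strictAnti_stdNormalCDF_sub (hσ : 1 < σ) (hc : 0 < c) :
    StrictAnti fun x ↦
      stdNormalCDF (-x + √(x ^ 2 + c) / σ) - stdNormalCDF (x / σ - √(x ^ 2 + c)) := by
  have hσ0 : 0 < σ := by linarith
  refine strictAnti_of_deriv_neg fun x ↦ ?_
  rw [(hasDerivAt_stdNormalCDF_sub hσ0.ne' hc x).deriv]
  have hxS := abs_lt_sqrt_sq_add hc x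
  set S := √(x ^ 2 + c)
  have hS0 : 0 < S := (abs_nonneg x).trans_lt hxS
  have hSsq : S ^ 2 = x ^ 2 + c := sq_sqrt (by positivity)
  have hm0 : x / σ - S < 0 := by
    rw [sub_neg, div_lt_iff₀ hσ0]
    nlinarith [le_abs_self x]
  have hmp : x / σ - S < -x + S / σ := by
    have hxS' : x < S := (le_abs_self x).trans_lt hxS
    have : (-x + S / σ) - (x / σ - S) = (S - x) * (1 + σ⁻¹) := by ring
    nlinarith [mul_pos (sub_pos.mpr hxS') (by positivity : (0 : ℝ) < 1 + σ⁻¹)]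
  have hsq : (-x + S / σ) ^ 2 < (x / σ - S) ^ 2 := by
    have hdiff : (x / σ - S) ^ 2 - (-x + S / σ) ^ 2 = c * (1 - (σ ^ 2)⁻¹) := by
      rw [← add_sub_cancel_left (x ^ 2) c, ← hSsq]
      ring
    have : (σ ^ 2)⁻¹ < 1 := inv_lt_one_of_one_lt₀ (one_lt_pow₀ hσ two_ne_zero)
    nlinarith
  exact div_neg_of_neg_of_pos (gaussianPDFReal_mul_sub_mul_neg hm0 hmp hsq) hS0

end

theorem stmt3_general (d : ℕ) (σ η ε : ℝ) (hd : 1 ≤ d) (hσ : 1 < σ) (hη : 0 < η)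
    (A h : ℝ) (hA : A = 2 * Real.sqrt d * σ / (σ ^ 2 - 1))
    (hh : h = 2 * σ ^ 2 * Real.log σ / (σ ^ 2 - 1))
    (g zp zm Drob : ℝ → ℝ)
    (hg : ∀ α, g α = (1 + α) / 2 * η - ε)
    (hzp : ∀ α, zp α = -A * g α + Real.sqrt ((A / σ) ^ 2 * (g α) ^ 2 + h / σ ^ 2))
    (hzm : ∀ α, zm α = (A / σ) * g α - Real.sqrt (A ^ 2 * (g α) ^ 2 + h))
    (hD : ∀ α, Drob α = stdNormalCDF (zp α) - stdNormalCDF (zm α)) :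
    StrictAntiOn Drob (Set.Ici (1 : ℝ)) := by
  have hσ0 : 0 < σ := by linarith
  have hσ2 : 0 < σ ^ 2 - 1 := by nlinarith
  have hA0 : 0 < A := by
    have : (0 : ℝ) < √d := sqrt_pos.2 (by exact_mod_cast hd)
    rw [hA]
    positivity
  have hh0 : 0 < h := by
    have := log_pos hσ
    rw [hh]
    positivity
  have hDrob : Drob = (fun x ↦ stdNormalCDF (-x + √(x ^ 2 + h) / σ)
      - stdNormalCDF (x / σ - √(x ^ 2 + h))) ∘ fun α ↦ A * g α := by
    funext α
    have hsqrt : √((A / σ) ^ 2 * g α ^ 2 + h / σ ^ 2) = √((A * g α) ^ 2 + h) / σ := by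
      rw [show (A / σ) ^ 2 * g α ^ 2 + h / σ ^ 2 = ((A * g α) ^ 2 + h) / σ ^ 2 by ring,
        sqrt_div' _ (sq_nonneg σ), sqrt_sq hσ0.le]
    rw [Function.comp_apply, hD, hzp, hzm, hsqrt, mul_pow]
    congr 2 <;> ring
  have hmono : StrictMono fun α ↦ A * g α := by
    intro a b hab
    simp only [hg]
    gcongr
  rw [hDrob]
  exact ((strictAnti_stdNormalCDF_sub hσ hh0).comp_strictMono hmono).strictAntiOn _

theorem stmt3 (d : ℕ) (σ η ε : ℝ) (hd : 1 ≤ d) (hσ : 1 < σ) (hη : 0 < η)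
    (hε0 : 0 < ε) (hεη : ε < η)
    (A h : ℝ) (hA : A = 2 * Real.sqrt d * σ / (σ ^ 2 - 1))
    (hh : h = 2 * σ ^ 2 * Real.log σ / (σ ^ 2 - 1))
    (g zp zm Drob : ℝ → ℝ)
    (hg : ∀ α, g α = (1 + α) / 2 * η - ε)
    (hzp : ∀ α, zp α = -A * g α + Real.sqrt ((A / σ) ^ 2 * (g α) ^ 2 + h / σ ^ 2))
    (hzm : ∀ α, zm α = (A / σ) * g α - Real.sqrt (A ^ 2 * (g α) ^ 2 + h))
    (hD : ∀ α, Drob α = stdNormalCDF (zp α) - stdNormalCDF (zm α)) :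
    StrictAntiOn Drob (Set.Ici (1 : ℝ)) :=
  stmt3_general d σ η ε hd hσ hη A h hA hh g zp zm Drob hg hzp hzm hD
end

section
/- Let σ > 1, A > 0, η > 0, and h(σ) = 2σ²·log σ/(σ²−1). Set g(α) = (1+α)/2·η and z₊(α) = −A·g(α) + √((A/σ)²·g(α)² + h(σ)/σ²). Then for all α ≥ 1, the derivative of z₊ with respect to α satisfies z₊'(α) ≤ −(A·η/2)·(1 − 1/σ) < 0; in particular z₊ is strictly decreasing. -/
open Real Set

/-!
Writing `c = h(σ)/σ² > 0`, the function is `z₊ = -A g + √((A g/σ)² + c)` with `g' = η/2`, so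
`z₊' = -A η/2 + (A η/(2σ)) · y/√(y² + c)` with `y = A g/σ`. Since `y ≤ |y| ≤ √(y² + c)`, the last
factor is at most `1`, which gives `z₊' ≤ -(A η/2)(1 - 1/σ) < 0` for every `α`.
-/

theorem div_sqrt_sq_add_le_one (y : ℝ) {c : ℝ} (hc : 0 ≤ c) : y / √(y ^ 2 + c) ≤ 1 := by
  refine div_le_one_of_le₀ ?_ (sqrt_nonneg _)
  calc y ≤ |y| := le_abs_self y
    _ = √(y ^ 2) := (sqrt_sq_eq_abs y).symm
    _ ≤ √(y ^ 2 + c) := sqrt_le_sqrt (by linarith)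

theorem HasDerivAt.sqrt_sq_add_const {f : ℝ → ℝ} {f' x c : ℝ} (hf : HasDerivAt f f' x)
    (hc : 0 < c) : HasDerivAt (fun x => √(f x ^ 2 + c)) (f' * (f x / √(f x ^ 2 + c))) x := by
  have hpos : 0 < f x ^ 2 + c := by positivity
  convert ((hf.fun_pow 2).add_const c).sqrt hpos.ne' using 1
  field_simp
  norm_num
  ring

theorem hasDerivAt_neg_mul_add_sqrt_sq_add {f : ℝ → ℝ} {f' x : ℝ} (A k : ℝ) {c : ℝ}
    (hf : HasDerivAt f f' x) (hc : 0 < c) :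
    HasDerivAt (fun x => -A * f x + √(k ^ 2 * f x ^ 2 + c))
      (-A * f' + k * f' * (k * f x / √((k * f x) ^ 2 + c))) x := by
  have hsqrt := (hf.const_mul k).sqrt_sq_add_const hc
  simpa only [mul_pow] using (hf.const_mul (-A)).fun_add hsqrt

theorem stmt5 (σ A η : ℝ) (hσ : 1 < σ) (hA : 0 < A) (hη : 0 < η)
    (h : ℝ) (hh : h = 2 * σ ^ 2 * Real.log σ / (σ ^ 2 - 1))
    (g zp : ℝ → ℝ)
    (hg : ∀ α, g α = (1 + α) / 2 * η)
    (hzp : ∀ α, zp α = -A * g α + Real.sqrt ((A / σ) ^ 2 * (g α) ^ 2 + h / σ ^ 2)) :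
    (∀ α ∈ Set.Ici (1 : ℝ),
      deriv zp α ≤ -(A * η / 2) * (1 - 1 / σ) ∧ -(A * η / 2) * (1 - 1 / σ) < 0) ∧
    StrictAntiOn zp (Set.Ici (1 : ℝ)) := by
  have hc : 0 < h / σ ^ 2 := by
    have : 0 < σ ^ 2 - 1 := by nlinarith
    have := log_pos hσ
    rw [hh]; positivity
  have hg' (α : ℝ) : HasDerivAt g (η / 2) α := by
    rw [show g = fun α => (1 + α) / 2 * η from funext hg]
    exact ((((hasDerivAt_id' α).const_add 1).div_const 2).mul_const η).congr_deriv (by ring)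
  have hzp' (α : ℝ) : HasDerivAt zp (-A * (η / 2) +
      A / σ * (η / 2) * (A / σ * g α / √((A / σ * g α) ^ 2 + h / σ ^ 2))) α := by
    rw [show zp = _ from funext hzp]
    exact hasDerivAt_neg_mul_add_sqrt_sq_add A (A / σ) (hg' α) hc
  have hbound (α : ℝ) : deriv zp α ≤ -(A * η / 2) * (1 - 1 / σ) := by
    rw [(hzp' α).deriv]
    have hsqrt_term := mul_le_of_le_one_right (by positivity : 0 ≤ A / σ * (η / 2))
      (div_sqrt_sq_add_le_one (A / σ * g α) hc.le)
    have hσ0 : σ ≠ 0 := by positivity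
    calc _ ≤ -A * (η / 2) + A / σ * (η / 2) := by linarith
      _ = _ := by field_simp; ring
  have hneg : -(A * η / 2) * (1 - 1 / σ) < 0 :=
    mul_neg_of_neg_of_pos (neg_neg_of_pos (by positivity))
      (sub_pos.mpr ((div_lt_one (by positivity)).mpr hσ))
  exact ⟨fun α _ => ⟨hbound α, hneg⟩,
    (strictAnti_of_deriv_neg fun α => (hbound α).trans_lt hneg).strictAntiOn _⟩
end

section
/- Let σ > 1, A > 0, h(σ) = 2σ²·log σ/(σ²−1), g ≥ 0. Then z₊(g) = −A·g + √((A/σ)²·g² + h(σ)/σ²) and z₋(g) = (A/σ)·g − √(A²·g² + h(σ)) satisfy z₊(g)² < z₋(g)². -/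
open Real Set

theorem stmt6 (σ A g : ℝ) (hσ : 1 < σ) (hA : 0 < A) (hg : 0 ≤ g)
    (h zp zm : ℝ)
    (hh : h = 2 * σ ^ 2 * Real.log σ / (σ ^ 2 - 1))
    (hzp : zp = -A * g + Real.sqrt ((A / σ) ^ 2 * g ^ 2 + h / σ ^ 2))
    (hzm : zm = (A / σ) * g - Real.sqrt (A ^ 2 * g ^ 2 + h)) :
    zp ^ 2 < zm ^ 2 := by
  have hσ0 : (0:ℝ) < σ := lt_trans one_pos hσ
  have hlog : 0 < Real.log σ := Real.log_pos hσ
  have hhpos : 0 < h := by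
    rw [hh]
    apply div_pos (by positivity)
    nlinarith
  have hnn : (0:ℝ) ≤ A ^ 2 * g ^ 2 + h := by positivity
  set s := Real.sqrt (A ^ 2 * g ^ 2 + h) with hsdef
  have hs : s ^ 2 = A ^ 2 * g ^ 2 + h := Real.sq_sqrt hnn
  have heq : (A / σ) ^ 2 * g ^ 2 + h / σ ^ 2 = (A ^ 2 * g ^ 2 + h) / σ ^ 2 := by
    field_simp
  have hsq : Real.sqrt ((A / σ) ^ 2 * g ^ 2 + h / σ ^ 2) = s / σ := by
    rw [heq, Real.sqrt_div hnn, Real.sqrt_sq hσ0.le]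
  rw [hzp, hzm, hsq]
  have key : ((A / σ) * g - s) ^ 2 - (-A * g + s / σ) ^ 2 = h * (1 - 1 / σ ^ 2) := by
    field_simp
    nlinarith [hs]
  have hpos : 0 < h * (1 - 1 / σ ^ 2) := by
    apply mul_pos hhpos
    have : 1 / σ ^ 2 < 1 := by
      rw [div_lt_one (by positivity)]
      nlinarith
    linarith
  linarith [key, hpos]
end

section
/- Let σ > 1, A > 0, g > 0, h(σ) = 2σ²·log σ/(σ²−1). Define z₊ = −A·g + √((A/σ)²·g² + h(σ)/σ²) and z₋ = (A/σ)·g − √(A²·g² + h(σ)). Then z₊·z₊' = z₋·z₋' where z₊' and z₋' denote derivatives with respect to g, i.e., z₊·(−A + (A/σ)²·g/√((A/σ)²·g² + h(σ)/σ²)) = z₋·(A/σ − A²·g/√(A²·g² + h(σ))). -/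
open Real Set

theorem stmt7 (σ A g : ℝ) (hσ : 1 < σ) (hA : 0 < A) (hg : 0 < g)
    (h zp zm : ℝ)
    (hh : h = 2 * σ ^ 2 * Real.log σ / (σ ^ 2 - 1))
    (hzp : zp = -A * g + Real.sqrt ((A / σ) ^ 2 * g ^ 2 + h / σ ^ 2))
    (hzm : zm = (A / σ) * g - Real.sqrt (A ^ 2 * g ^ 2 + h)) :
    zp * (-A + (A / σ) ^ 2 * g / Real.sqrt ((A / σ) ^ 2 * g ^ 2 + h / σ ^ 2)) =
    zm * (A / σ - A ^ 2 * g / Real.sqrt (A ^ 2 * g ^ 2 + h)) := by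
  have hσ0 : 0 < σ := lt_trans one_pos hσ
  have hhpos : 0 < h := by
    rw [hh]
    apply div_pos
    · have hl := Real.log_pos hσ; positivity
    · nlinarith
  have hX : 0 < A ^ 2 * g ^ 2 + h := by nlinarith
  set S := Real.sqrt (A ^ 2 * g ^ 2 + h) with hS
  have hSpos : 0 < S := Real.sqrt_pos.mpr hX
  have hSsq : S ^ 2 = A ^ 2 * g ^ 2 + h := Real.sq_sqrt hX.le
  have hsmall : Real.sqrt ((A / σ) ^ 2 * g ^ 2 + h / σ ^ 2) = S / σ := by
    rw [show (A / σ) ^ 2 * g ^ 2 + h / σ ^ 2 = (S / σ) ^ 2 by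
      field_simp
      nlinarith [hSsq]]
    exact Real.sqrt_sq (by positivity)
  rw [hzp, hzm, hsmall]
  field_simp
  nlinarith [hSsq, hSpos, sq_nonneg (S - σ)]
end
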